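/- arXiv:2205.14768 — 7 statements merged into one kernel-verified Lean document; each statement's English description precedes it below -/
import Mathlib

section
/- Let U be a connected topological space, and let A₁, A₂ be open connected subsets of U, both nonempty and different from U. Suppose (i) A₁ ∩ A₂ ≠ ∅, (ii) A₁ ∩ (U \ A₂) ≠ ∅, (iii) A₂ ∩ (U \ A₁) ≠ ∅, and (iv) the frontiers of A₁ and A₂ in U are connected and disjoint. Then the frontier of A₁ in U is contained in A₂ and the frontier of A₂ in U is contained in A₁. -/
/-!
A connected set meeting both `A` and its complement meets `frontier A`; hence `frontier A₁`
meets `A₂`. Being connected and disjoint from `frontier A₂`, the set `frontier A₁` then cannot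
leave the open set `A₂`, and symmetrically.
-/

open Set

theorem IsPreconnected.subset_of_disjoint_frontier {X : Type*} [TopologicalSpace X]
    {s u : Set X} (hs : IsPreconnected s) (hu : IsOpen u) (hsu : (s ∩ u).Nonempty)
    (hd : Disjoint s (frontier u)) : s ⊆ u :=
  hs.subset_of_closure_inter_subset hu hsu fun _ ⟨hxc, hxs⟩ =>
    by_contra fun hxu => hd.ne_of_mem hxs ⟨hxc, hu.interior_eq.symm ▸ hxu⟩ rfl

theorem IsPreconnected.inter_frontier_nonempty {X : Type*} [TopologicalSpace X]
    {s t : Set X} (hs : IsPreconnected s) (hst : (s ∩ t).Nonempty) (hst' : (s ∩ tᶜ).Nonempty) :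
    (s ∩ frontier t).Nonempty := by
  by_contra h
  rw [not_nonempty_iff_eq_empty, ← disjoint_iff_inter_eq_empty] at h
  obtain ⟨x, hxs, hxt⟩ := hst
  have hs_interior : s ⊆ interior t :=
    hs.subset_of_disjoint_frontier isOpen_interior
      ⟨x, hxs, (mem_interior_iff_notMem_frontier hxt).2 (h.notMem_of_mem_left hxs)⟩
      (h.mono_right frontier_interior_subset)
  obtain ⟨y, hys, hyt⟩ := hst'
  exact hyt (interior_subset (hs_interior hys))

theorem frontier_subset_of_disjoint_frontier {X : Type*} [TopologicalSpace X] {s u : Set X}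
    (hs : IsPreconnected (frontier s)) (hu : IsOpen u) (hu' : IsPreconnected u)
    (hus : (u ∩ s).Nonempty) (hus' : (u ∩ sᶜ).Nonempty) (hd : Disjoint (frontier s) (frontier u)) :
    frontier s ⊆ u :=
  hs.subset_of_disjoint_frontier hu (inter_comm u _ ▸ hu'.inter_frontier_nonempty hus hus') hd

theorem frontier_subset_of_chain_lemma_general
    (U : Type*) [TopologicalSpace U]
    (A₁ A₂ : Set U)
    (h₁o : IsOpen A₁) (h₂o : IsOpen A₂)
    (h₁c : IsConnected A₁) (h₂c : IsConnected A₂)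
    (h12 : (A₁ ∩ A₂).Nonempty)
    (h1not2 : (A₁ ∩ A₂ᶜ).Nonempty)
    (h2not1 : (A₂ ∩ A₁ᶜ).Nonempty)
    (hf₁ : IsConnected (frontier A₁)) (hf₂ : IsConnected (frontier A₂))
    (hdisj : Disjoint (frontier A₁) (frontier A₂)) :
    frontier A₁ ⊆ A₂ ∧ frontier A₂ ⊆ A₁ :=
  ⟨frontier_subset_of_disjoint_frontier hf₁.isPreconnected h₂o h₂c.isPreconnected
      (inter_comm A₁ A₂ ▸ h12) h2not1 hdisj,
    frontier_subset_of_disjoint_frontier hf₂.isPreconnected h₁o h₁c.isPreconnected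
      h12 h1not2 hdisj.symm⟩

/-- Lemma 1 (i): frontier containment for two overlapping open connected proper subsets
of a connected space with connected disjoint frontiers. -/
theorem frontier_subset_of_chain_lemma
    (U : Type*) [TopologicalSpace U] [ConnectedSpace U]
    (A₁ A₂ : Set U)
    (h₁o : IsOpen A₁) (h₂o : IsOpen A₂)
    (h₁c : IsConnected A₁) (h₂c : IsConnected A₂)
    (h₁ne : A₁ ≠ Set.univ) (h₂ne : A₂ ≠ Set.univ)
    (h12 : (A₁ ∩ A₂).Nonempty)
    (h1not2 : (A₁ ∩ A₂ᶜ).Nonempty)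
    (h2not1 : (A₂ ∩ A₁ᶜ).Nonempty)
    (hf₁ : IsConnected (frontier A₁)) (hf₂ : IsConnected (frontier A₂))
    (hdisj : Disjoint (frontier A₁) (frontier A₂)) :
    frontier A₁ ⊆ A₂ ∧ frontier A₂ ⊆ A₁ :=
  frontier_subset_of_chain_lemma_general U A₁ A₂ h₁o h₂o h₁c h₂c h12 h1not2 h2not1 hf₁ hf₂ hdisj
end

section
/- Let U be a connected topological space, and let A₁, A₂ be open connected subsets of U, both nonempty and different from U. Suppose A₁ ∩ A₂ ≠ ∅, A₁ ∩ (U \ A₂) ≠ ∅, A₂ ∩ (U \ A₁) ≠ ∅, and the frontiers of A₁ and A₂ in U are connected and disjoint. Then U = A₁ ∪ A₂. -/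
/-!
The frontier of `A₁` is preconnected and misses the frontier of `A₂`, so it lies either in `A₂`
or outside `closure A₂`. In the second case `closure A₂` is preconnected and misses the frontier
of `A₁`, so it lies in `A₁` or outside `closure A₁`; the first option contradicts `A₂ ⊄ A₁`,
the second `A₁ ∩ A₂ ≠ ∅`. Hence `frontier A₁ ⊆ A₂` and symmetrically `frontier A₂ ⊆ A₁`, which
makes `A₁ ∪ A₂` closed, so it is a nonempty clopen subset of the connected space `U`.
-/

open Set

section

variable {X : Type*} [TopologicalSpace X] {s t u : Set X}

theorem IsPreconnected.subset_interior_or_subset_compl_closure (hu : IsPreconnected u)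
    (h : Disjoint u (frontier t)) : u ⊆ interior t ∨ u ⊆ (closure t)ᶜ := by
  refine hu.subset_or_subset isOpen_interior isClosed_closure.isOpen_compl
    (disjoint_compl_right_iff_subset.mpr interior_subset_closure) fun x hx => ?_
  by_cases hxt : x ∈ closure t
  · rw [closure_eq_interior_union_frontier] at hxt
    exact Or.inl (hxt.resolve_right (disjoint_left.mp h hx))
  · exact Or.inr hxt

theorem frontier_subset_interior_of_disjoint_frontier (ht : IsPreconnected t)
    (hst : (s ∩ t).Nonempty) (hts : (t \ s).Nonempty) (hfs : IsPreconnected (frontier s))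
    (h : Disjoint (frontier s) (frontier t)) : frontier s ⊆ interior t := by
  refine (hfs.subset_interior_or_subset_compl_closure h).resolve_right fun hout => ?_
  have hclosure : Disjoint (closure t) (frontier s) :=
    subset_compl_iff_disjoint_left.mp hout
  rcases ht.closure.subset_interior_or_subset_compl_closure hclosure with hin | hout'
  · obtain ⟨x, hxt, hxs⟩ := hts
    exact hxs (interior_subset (hin (subset_closure hxt)))
  · obtain ⟨x, hxs, hxt⟩ := hst
    exact hout' (subset_closure hxt) (subset_closure hxs)

theorem isClosed_union_of_frontier_subset (hs : frontier s ⊆ t) (ht : frontier t ⊆ s) :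
    IsClosed (s ∪ t) := by
  refine isClosed_of_closure_subset ?_
  rw [closure_union, closure_eq_self_union_frontier s, closure_eq_self_union_frontier t]
  exact union_subset (union_subset subset_union_left (hs.trans subset_union_right))
    (union_subset subset_union_right (ht.trans subset_union_left))

end

theorem union_eq_univ_of_chain_lemma_general
    (U : Type*) [TopologicalSpace U] [ConnectedSpace U]
    (A₁ A₂ : Set U)
    (h₁o : IsOpen A₁) (h₂o : IsOpen A₂)
    (h₁c : IsConnected A₁) (h₂c : IsConnected A₂)
    (h12 : (A₁ ∩ A₂).Nonempty)
    (h1not2 : (A₁ ∩ A₂ᶜ).Nonempty)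
    (h2not1 : (A₂ ∩ A₁ᶜ).Nonempty)
    (hf₁ : IsConnected (frontier A₁)) (hf₂ : IsConnected (frontier A₂))
    (hdisj : Disjoint (frontier A₁) (frontier A₂)) :
    A₁ ∪ A₂ = Set.univ := by
  have hfr₁ : frontier A₁ ⊆ A₂ := h₂o.interior_eq ▸
    frontier_subset_interior_of_disjoint_frontier h₂c.isPreconnected h12 h2not1
      hf₁.isPreconnected hdisj
  have hfr₂ : frontier A₂ ⊆ A₁ := h₁o.interior_eq ▸
    frontier_subset_interior_of_disjoint_frontier h₁c.isPreconnected (inter_comm A₁ A₂ ▸ h12)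
      h1not2 hf₂.isPreconnected hdisj.symm
  exact IsClopen.eq_univ ⟨isClosed_union_of_frontier_subset hfr₁ hfr₂, h₁o.union h₂o⟩
    (h12.mono (inter_subset_left.trans subset_union_left))

/-- Lemma 1 (i): frontier containment for two overlapping open connected proper subsets
of a connected space with connected disjoint frontiers. -/
theorem union_eq_univ_of_chain_lemma
    (U : Type*) [TopologicalSpace U] [ConnectedSpace U]
    (A₁ A₂ : Set U)
    (h₁o : IsOpen A₁) (h₂o : IsOpen A₂)
    (h₁c : IsConnected A₁) (h₂c : IsConnected A₂)
    (h₁ne : A₁ ≠ Set.univ) (h₂ne : A₂ ≠ Set.univ)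
    (h12 : (A₁ ∩ A₂).Nonempty)
    (h1not2 : (A₁ ∩ A₂ᶜ).Nonempty)
    (h2not1 : (A₂ ∩ A₁ᶜ).Nonempty)
    (hf₁ : IsConnected (frontier A₁)) (hf₂ : IsConnected (frontier A₂))
    (hdisj : Disjoint (frontier A₁) (frontier A₂)) :
    A₁ ∪ A₂ = Set.univ :=
  union_eq_univ_of_chain_lemma_general U A₁ A₂ h₁o h₂o h₁c h₂c h12 h1not2 h2not1 hf₁ hf₂ hdisj
end

section
/- Let w, w' be complex numbers and 0 < ε < 1 with |w' − w| < ε|w|. Write w = r·e^{iη} with r = |w| > 0, and let r' = |w'|. Then there exists a unique real number η' with |η' − η| < (π/2)·ε such that w' = r'·e^{iη'}, and moreover |r' − r| < ε·r. -/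
open Real ComplexConjugate

/-!
Put `u = w' / w`, so `‖u - 1‖ < ε` and `w' = ‖w'‖ e^{i(η + arg u)}`. The distance from `1` to the
line `ℝu` is `|sin (arg u)|`, hence `|sin (arg u)| ≤ ‖u - 1‖ < ε`; as `Re u > 0`, `|arg u| < π/2`
and Jordan's inequality `2/π |x| ≤ |sin x|` gives `|arg u| < π/2 · ε`. Any other admissible `η'`
differs from `η + arg u` by less than `π`, hence by no nonzero multiple of `2π`.
-/

namespace Complex

lemma abs_im_le_norm_sub_one_mul_norm (u : ℂ) : |u.im| ≤ ‖u - 1‖ * ‖u‖ := by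
  have him : ((u - 1) * conj u).im = u.im := by
    simp only [mul_im, sub_re, one_re, conj_im, mul_neg, sub_im, one_im, sub_zero, conj_re]
    ring
  rw [← him, ← norm_conj u, ← norm_mul]
  exact abs_im_le_norm _

lemma abs_sin_arg_le_norm_sub_one (u : ℂ) : |Real.sin (arg u)| ≤ ‖u - 1‖ := by
  rw [sin_arg, abs_div, abs_norm]
  exact div_le_of_le_mul₀ (norm_nonneg _) (norm_nonneg _) (abs_im_le_norm_sub_one_mul_norm u)

lemma re_pos_of_norm_sub_one_lt_one {u : ℂ} (hu : ‖u - 1‖ < 1) : 0 < u.re := by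
  have h := (abs_re_le_norm (u - 1)).trans_lt hu
  rw [sub_re, one_re] at h
  linarith [neg_abs_le (u.re - 1)]

lemma abs_arg_le_pi_div_two_mul_norm_sub_one {u : ℂ} (hu : ‖u - 1‖ < 1) :
    |arg u| ≤ π / 2 * ‖u - 1‖ := by
  have harg : |arg u| ≤ π / 2 :=
    (abs_arg_lt_pi_div_two_iff.mpr (Or.inl (re_pos_of_norm_sub_one_lt_one hu))).le
  calc |arg u| = π / 2 * (2 / π * |arg u|) := by field_simp
    _ ≤ π / 2 * ‖u - 1‖ := by
      gcongr
      exact (mul_abs_le_abs_sin harg).trans (abs_sin_arg_le_norm_sub_one u)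

lemma eq_of_exp_mul_I_eq_of_abs_sub_lt {a b : ℝ} (h : exp (a * I) = exp (b * I))
    (hab : |a - b| < 2 * π) : a = b := by
  obtain ⟨hlo, hhi⟩ := abs_lt.mp hab
  rw [← sub_eq_zero, ← Real.cos_eq_one_iff_of_lt_of_lt (by linarith) hhi, ← exp_ofReal_mul_I_re,
    ofReal_sub, sub_mul, exp_sub, h, div_self (exp_ne_zero _), one_re]

lemma mul_eq_norm_mul_exp_add_mul_I {z v : ℂ} {a b : ℝ}
    (hz : z = ‖z‖ * exp (a * I)) (hv : v = ‖v‖ * exp (b * I)) :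
    z * v = ‖z * v‖ * exp ((a + b : ℝ) * I) := by
  conv_lhs => rw [hz, hv]
  rw [norm_mul, ofReal_add, add_mul, exp_add]
  push_cast
  ring

end Complex

open Complex

theorem polar_angle_estimate_general
    (w w' : ℂ) (ε η : ℝ)
    (hε1 : ε < 1)
    (hw0 : w ≠ 0)
    (hclose : ‖w' - w‖ < ε * ‖w‖)
    (hpolar : w = (‖w‖ : ℂ) * Complex.exp (η * Complex.I)) :
    (∃! η' : ℝ, |η' - η| < π / 2 * ε ∧
      w' = (‖w'‖ : ℂ) * Complex.exp (η' * Complex.I)) ∧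
    |‖w'‖ - ‖w‖| < ε * ‖w‖ := by
  set u := w' / w
  have hw'u : w' = w * u := (mul_div_cancel₀ w' hw0).symm
  have hu : ‖u - 1‖ < ε := by
    rwa [div_sub_one hw0, norm_div, div_lt_iff₀ (norm_pos_iff.mpr hw0)]
  have harg : |arg u| < π / 2 * ε :=
    (abs_arg_le_pi_div_two_mul_norm_sub_one (hu.trans hε1)).trans_lt (by gcongr)
  have hw' : w' = ‖w'‖ * exp ((η + arg u : ℝ) * I) := by
    rw [hw'u]
    exact mul_eq_norm_mul_exp_add_mul_I hpolar (norm_mul_exp_arg_mul_I u).symm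
  have hw'0 : w' ≠ 0 := by
    rw [hw'u]
    exact mul_ne_zero hw0 (ne_of_apply_ne re (re_pos_of_norm_sub_one_lt_one (hu.trans hε1)).ne')
  refine ⟨⟨η + arg u, ⟨by rwa [add_sub_cancel_left], hw'⟩, fun η' ⟨hη', hw'η'⟩ => ?_⟩,
    (abs_norm_sub_norm_le w' w).trans_lt hclose⟩
  refine eq_of_exp_mul_I_eq_of_abs_sub_lt
    (mul_left_cancel₀ (ofReal_ne_zero.mpr (norm_ne_zero_iff.mpr hw'0)) (hw'η'.symm.trans hw')) ?_
  calc |η' - (η + arg u)| ≤ |η' - η| + |arg u| := by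
        rw [sub_add_eq_sub_sub]; exact abs_sub _ _
    _ < π / 2 * ε + π / 2 * ε := add_lt_add hη' harg
    _ < 2 * π := by nlinarith [pi_pos]

/-- Lemma 4: polar-coordinate comparison of nearby complex numbers. -/
theorem polar_angle_estimate
    (w w' : ℂ) (ε η : ℝ)
    (hε0 : 0 < ε) (hε1 : ε < 1)
    (hw0 : w ≠ 0)
    (hclose : ‖w' - w‖ < ε * ‖w‖)
    (hpolar : w = (‖w‖ : ℂ) * Complex.exp (η * Complex.I)) :
    (∃! η' : ℝ, |η' - η| < π / 2 * ε ∧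
      w' = (‖w'‖ : ℂ) * Complex.exp (η' * Complex.I)) ∧
    |‖w'‖ - ‖w‖| < ε * ‖w‖ :=
  polar_angle_estimate_general w w' ε η hε1 hw0 hclose hpolar
end

section
/- Let α ∈ (0, 2π), n ≥ 1, 0 < ε < 1 with n·(π/2)·ε < n·α − 2π. Let F : ℝ × (0, δ) → ℝ × (0, ∞) be such that all iterates F, F², …, Fⁿ are defined on points of β̂ = (a,b) × {r₀} (b − a < 2π), and suppose that for every (θ₀, r₀) ∈ β̂ and 1 ≤ j ≤ n, writing Fʲ(θ₀, r₀) = (θⱼ, rⱼ), one has |θⱼ − (θ₀ + jα)| < j·(π/2)·ε. If Fⁿ(β̂) ∩ (β̂ + (2kπ, 0)) ≠ ∅ for some integer k, then k ≥ 1. -/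
open Real

/-! The `n`-th iterate displaces every angle of `β̂` by more than `nα - nπε/2 > 2π`, while two
angles of `β̂` differ by less than `b - a < 2π`; so a point of `Fⁿ(β̂)` lying over `β̂` must
have been translated by a positive number of full turns. -/

lemma one_le_of_two_pi_lt_add_two_mul_int_mul_pi_sub {θ₀ θ₁ : ℝ} {k : ℤ}
    (hmove : 2 * π < θ₁ + 2 * k * π - θ₀) (hclose : θ₁ - θ₀ < 2 * π) : 1 ≤ k := by
  have hk : (0 : ℝ) < k := pos_of_mul_pos_left (by linarith : (0 : ℝ) < k * π) pi_pos.le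
  exact_mod_cast hk

theorem iterate_translate_index_pos_general
    (F : ℝ × ℝ → ℝ × ℝ) (α ε a b r₀ : ℝ) (n : ℕ) (k : ℤ)
    (hn : 1 ≤ n)
    (hna : (n : ℝ) * (π / 2) * ε < (n : ℝ) * α - 2 * π)
    (hab : b - a < 2 * π)
    (hiter : ∀ θ₀ ∈ Set.Ioo a b, ∀ j : ℕ, 1 ≤ j → j ≤ n →
      |(F^[j] (θ₀, r₀)).1 - (θ₀ + (j : ℝ) * α)| < (j : ℝ) * (π / 2) * ε)
    (hint : ∃ θ₀ ∈ Set.Ioo a b, ∃ θ₁ ∈ Set.Ioo a b,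
      F^[n] (θ₀, r₀) = (θ₁ + 2 * (k : ℝ) * π, r₀)) :
    1 ≤ k := by
  obtain ⟨θ₀, hθ₀, θ₁, hθ₁, hF⟩ := hint
  have hdisp : |θ₁ + 2 * k * π - (θ₀ + n * α)| < n * (π / 2) * ε := by
    simpa only [hF] using hiter θ₀ hθ₀ n hn le_rfl
  have hmove := (abs_lt.mp hdisp).1
  exact one_le_of_two_pi_lt_add_two_mul_int_mul_pi_sub (θ₀ := θ₀) (θ₁ := θ₁) (by linarith)
    (by linarith [hθ₀.1, hθ₁.2])

/-- Lemma 7: the `n`-th iterate of the lift moves the segment `β̂` by at least one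
full turn: if `Fⁿ(β̂)` meets `β̂ + (2kπ, 0)` then `k ≥ 1`. -/
theorem iterate_translate_index_pos
    (F : ℝ × ℝ → ℝ × ℝ) (α ε δ a b r₀ : ℝ) (n : ℕ) (k : ℤ)
    (hn : 1 ≤ n)
    (hα0 : 0 < α) (hα1 : α < 2 * π)
    (hε0 : 0 < ε) (hε1 : ε < 1)
    (hna : (n : ℝ) * (π / 2) * ε < (n : ℝ) * α - 2 * π)
    (ha0 : 0 ≤ a) (ha1 : a < 2 * π) (hab : b - a < 2 * π)
    (hr0 : 0 < r₀) (hrδ : r₀ < δ)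
    (hiter : ∀ θ₀ ∈ Set.Ioo a b, ∀ j : ℕ, 1 ≤ j → j ≤ n →
      |(F^[j] (θ₀, r₀)).1 - (θ₀ + (j : ℝ) * α)| < (j : ℝ) * (π / 2) * ε)
    (hint : ∃ θ₀ ∈ Set.Ioo a b, ∃ θ₁ ∈ Set.Ioo a b,
      F^[n] (θ₀, r₀) = (θ₁ + 2 * (k : ℝ) * π, r₀)) :
    1 ≤ k :=
  iterate_translate_index_pos_general F α ε a b r₀ n k hn hna hab hiter hint
end

section
/- Let α ∈ (0, 2π), n ≥ 1, 0 < ε < 1 with n·(π/2)·ε < n·(2π − α) − 2π. Let F : ℝ × (0, δ) → ℝ × (0, ∞) satisfy, for (θ₀,r₀) ∈ β̂ = (a,b) × {r₀} with b − a < 2π and 1 ≤ j ≤ n, |θⱼ − (θ₀ + jα)| < j·(π/2)·ε where (θⱼ, rⱼ) = Fʲ(θ₀, r₀). Define H(θ, r) = F(θ, r) − (2π, 0). If Hⁿ(β̂) ∩ (β̂ + (2kπ, 0)) ≠ ∅ for some integer k, then k ≤ −1. -/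
/-!
Since `F` commutes with the deck translation, `Hⁿ = Fⁿ - (2nπ, 0)`. The drift bound at `j = n`
and `n (π/2) ε < n (2π - α) - 2π` put the angle of `Fⁿ(θ₀, r₀)` below `θ₀ + 2nπ - 2π`, so the
angle `θ₁ + 2kπ` of `Hⁿ(θ₀, r₀)` is below `θ₀ - 2π < b - 2π < a < θ₁`, which forces `k < 0`.
-/

open Real

theorem iterate_sub_right_of_map_add_right {G : Type*} [AddGroup G] {f : G → G} {v : G}
    (hf : ∀ x, f (x + v) = f x + v) (n : ℕ) (x : G) :
    (fun y => f y - v)^[n] x = f^[n] x - n • v := by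
  have hcomm : Function.Commute (· - v) f := fun y => by
    simpa using (eq_sub_of_add_eq (hf (y - v)).symm).symm
  change ((· - v) ∘ f)^[n] x = _
  rw [hcomm.comp_iterate, Function.comp_apply]
  simp only [sub_eq_add_neg, add_right_iterate_apply, neg_nsmul]

theorem iterate_alternate_lift {F : ℝ × ℝ → ℝ × ℝ}
    (hequiv : ∀ θ r : ℝ, F (θ + 2 * π, r) = ((F (θ, r)).1 + 2 * π, (F (θ, r)).2))
    (n : ℕ) (p : ℝ × ℝ) :
    (fun p : ℝ × ℝ => ((F p).1 - 2 * π, (F p).2))^[n] p =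
      ((F^[n] p).1 - n * (2 * π), (F^[n] p).2) := by
  have hdeck : ∀ q, F (q + (2 * π, 0)) = F q + (2 * π, 0) := fun ⟨θ, r⟩ => by
    simpa [Prod.ext_iff] using hequiv θ r
  have hH : (fun p : ℝ × ℝ => ((F p).1 - 2 * π, (F p).2)) = fun q => F q - (2 * π, 0) :=
    funext fun q => by ext <;> simp
  rw [hH, iterate_sub_right_of_map_add_right hdeck]
  ext <;> simp

theorem alternate_lift_translate_index_neg_general
    (F : ℝ × ℝ → ℝ × ℝ) (α ε a b r₀ : ℝ) (n : ℕ) (k : ℤ)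
    (hn : 1 ≤ n)
    (hna : (n : ℝ) * (π / 2) * ε < (n : ℝ) * (2 * π - α) - 2 * π)
    (hab : b - a < 2 * π)
    (hequiv : ∀ θ r : ℝ, F (θ + 2 * π, r) = ((F (θ, r)).1 + 2 * π, (F (θ, r)).2))
    (hiter : ∀ θ₀ ∈ Set.Ioo a b, ∀ j : ℕ, 1 ≤ j → j ≤ n →
      |(F^[j] (θ₀, r₀)).1 - (θ₀ + (j : ℝ) * α)| < (j : ℝ) * (π / 2) * ε)
    (hint : ∃ θ₀ ∈ Set.Ioo a b, ∃ θ₁ ∈ Set.Ioo a b,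
      (fun p : ℝ × ℝ => ((F p).1 - 2 * π, (F p).2))^[n] (θ₀, r₀) =
        (θ₁ + 2 * (k : ℝ) * π, r₀)) :
    k ≤ -1 := by
  obtain ⟨θ₀, hθ₀, θ₁, hθ₁, hmeet⟩ := hint
  rw [iterate_alternate_lift hequiv] at hmeet
  have hθ : (F^[n] (θ₀, r₀)).1 - n * (2 * π) = θ₁ + 2 * k * π := congrArg Prod.fst hmeet
  have hdrift := (abs_lt.1 (hiter θ₀ hθ₀ n hn le_rfl)).2
  have hk : 2 * π * k < 2 * π * 0 := by linarith [hθ₀.2, hθ₁.1]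
  have : k < 0 := by exact_mod_cast lt_of_mul_lt_mul_left hk (by positivity)
  omega

/-- Lemma 8: for the alternate lift `H = F - (2π, 0)`, if `Hⁿ(β̂)` meets
`β̂ + (2kπ, 0)` then `k ≤ -1`. -/
theorem alternate_lift_translate_index_neg
    (F : ℝ × ℝ → ℝ × ℝ) (α ε δ a b r₀ : ℝ) (n : ℕ) (k : ℤ)
    (hn : 1 ≤ n)
    (hα0 : 0 < α) (hα1 : α < 2 * π)
    (hε0 : 0 < ε) (hε1 : ε < 1)
    (hna : (n : ℝ) * (π / 2) * ε < (n : ℝ) * (2 * π - α) - 2 * π)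
    (ha0 : 0 ≤ a) (ha1 : a < 2 * π) (hab : b - a < 2 * π)
    (hr0 : 0 < r₀) (hrδ : r₀ < δ)
    (hequiv : ∀ θ r : ℝ, F (θ + 2 * π, r) = ((F (θ, r)).1 + 2 * π, (F (θ, r)).2))
    (hiter : ∀ θ₀ ∈ Set.Ioo a b, ∀ j : ℕ, 1 ≤ j → j ≤ n →
      |(F^[j] (θ₀, r₀)).1 - (θ₀ + (j : ℝ) * α)| < (j : ℝ) * (π / 2) * ε)
    (hint : ∃ θ₀ ∈ Set.Ioo a b, ∃ θ₁ ∈ Set.Ioo a b,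
      (fun p : ℝ × ℝ => ((F p).1 - 2 * π, (F p).2))^[n] (θ₀, r₀) =
        (θ₁ + 2 * (k : ℝ) * π, r₀)) :
    k ≤ -1 :=
  alternate_lift_translate_index_neg_general F α ε a b r₀ n k hn hna hab hequiv hiter hint
end

section
/- Let f : S → S be an orientation-preserving, area-preserving homeomorphism of a compact connected orientable surface S, and let U be an invariant domain with finitely many ideal boundary points. If e is a fixed prime end of U and p is a principal point of e, then f(p) = p. -/
open Filter Topology MeasureTheory

variable {S : Type*} [TopologicalSpace S]

/-- Frontier of `V` relative to the open set `U` (for `V ⊆ U` open). -/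
def frIn (U V : Set S) : Set S := (closure V ∩ U) \ V

/-- A chain in the domain `U`. -/
def IsPEChain (U : Set S) (V : ℕ → Set S) : Prop :=
  (∀ i, IsOpen (V i)) ∧ (∀ i, IsConnected (V i)) ∧ (∀ i, V i ⊆ U) ∧
  (∀ i, V (i + 1) ⊆ V i) ∧
  (∀ i, (frIn U (V i)).Nonempty ∧ IsPreconnected (frIn U (V i))) ∧
  (∀ i j, i ≠ j → closure (frIn U (V i)) ∩ closure (frIn U (V j)) = ∅)

/-- The chain `W` divides the chain `V`. -/
def ChainDivides (W V : ℕ → Set S) : Prop := ∀ i, ∃ j, W j ⊆ V i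

/-- Two chains are equivalent if each divides the other. -/
def ChainEquiv (W V : ℕ → Set S) : Prop := ChainDivides W V ∧ ChainDivides V W

/-- The frontiers of the chain `V` converge to the point `p`. -/
def FrTendsTo (U : Set S) (V : ℕ → Set S) (p : S) : Prop :=
  ∀ N ∈ 𝓝 p, ∀ᶠ i in atTop, frIn U (V i) ⊆ N

/-! If `f p ≠ p`, choose an open `A ∋ p` with `f(A) ∩ A = ∅`. Far along the chain, a link
`D = W a` has relative frontier `F ⊆ A`, meets its image `f(D)`, and `f(D)` lies in an earlier link
`W N`. Since `F` is connected and `f(F)`, `f⁻¹(F)` avoid `F`, each lies in `D` or misses it. If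
`f⁻¹(F)` missed `D`, then `f` would map the relative closure of `D` into `D`, and the points of
`D \ closure (f D)` would never return, against Poincaré recurrence; symmetrically for `f(F)` and
`f⁻¹`. So `D ∪ f(D)` is relatively clopen in the connected set `U`, forcing `U ⊆ W N`, whose
relative frontier is then empty. -/

open Set

theorem Homeomorph.symm_image_eq {U : Set S} (g : S ≃ₜ S) (hgU : g '' U = U) : g.symm '' U = U := by
  calc g.symm '' U = g.symm '' (g '' U) := by rw [hgU]
    _ = U := g.toEquiv.symm_image_image U

theorem Homeomorph.disjoint_symm_image_self (g : S ≃ₜ S) {s : Set S} (h : Disjoint (g '' s) s) :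
    Disjoint (g.symm '' s) s := by
  rw [g.image_symm]
  exact (disjoint_image_left.mp h).symm

theorem Homeomorph.symm_image_inter_self_nonempty (g : S ≃ₜ S) {s : Set S}
    (h : (g '' s ∩ s).Nonempty) : (g.symm '' s ∩ s).Nonempty := by
  obtain ⟨_, ⟨x, hx, rfl⟩, hgx⟩ := h
  exact ⟨x, ⟨g x, hgx, g.symm_apply_apply x⟩, hx⟩

theorem Homeomorph.measurePreserving_symm {α β : Type*} [TopologicalSpace α] [MeasurableSpace α]
    [BorelSpace α] [TopologicalSpace β] [MeasurableSpace β] [BorelSpace β]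
    {μ : Measure α} {ν : Measure β} (g : α ≃ₜ β) (hg : MeasurePreserving g μ ν) :
    MeasurePreserving g.symm ν μ := by
  rw [← Homeomorph.toMeasurableEquiv_coe] at hg
  simpa using hg.symm g.toMeasurableEquiv

theorem exists_isOpen_disjoint_image [T2Space S] {g : S → S} (hg : Continuous g) {p : S}
    (hp : g p ≠ p) : ∃ A, IsOpen A ∧ p ∈ A ∧ Disjoint (g '' A) A := by
  obtain ⟨u, v, hu, hv, hpu, hpv, huv⟩ := t2_separation hp
  refine ⟨v ∩ g ⁻¹' u, hv.inter (hu.preimage hg), ⟨hpv, hpu⟩, ?_⟩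
  exact huv.mono (image_subset_iff.mpr inter_subset_right) inter_subset_left

section Chains

variable {α : Type*} {X Y Z : ℕ → Set α}

theorem ChainDivides.trans (hXY : ChainDivides X Y) (hYZ : ChainDivides Y Z) : ChainDivides X Z :=
  fun i =>
    let ⟨j, hj⟩ := hYZ i
    let ⟨k, hk⟩ := hXY j
    ⟨k, hk.trans hj⟩

theorem ChainDivides.image (g : α → α) (h : ChainDivides X Y) :
    ChainDivides (fun i => g '' X i) (fun i => g '' Y i) :=
  fun i =>
    let ⟨j, hj⟩ := h i
    ⟨j, image_mono hj⟩

theorem ChainEquiv.symm (h : ChainEquiv X Y) : ChainEquiv Y X := ⟨h.2, h.1⟩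

theorem ChainEquiv.trans (hXY : ChainEquiv X Y) (hYZ : ChainEquiv Y Z) : ChainEquiv X Z :=
  ⟨hXY.1.trans hYZ.1, hYZ.2.trans hXY.2⟩

theorem ChainEquiv.image (g : α → α) (h : ChainEquiv X Y) :
    ChainEquiv (fun i => g '' X i) (fun i => g '' Y i) :=
  ⟨h.1.image g, h.2.image g⟩

theorem ChainEquiv.exists_image_subset_and_inter_nonempty {g : α → α} (hX : Antitone X)
    (hne : ∀ i, (X i).Nonempty) (h : ChainEquiv (fun i => g '' X i) X) (N : ℕ) :
    ∃ a ≥ N, g '' X a ⊆ X N ∧ (g '' X a ∩ X a).Nonempty := by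
  obtain ⟨j, hj⟩ := h.1 N
  obtain ⟨k, hk⟩ := h.2 (max j N)
  obtain ⟨x, hx⟩ := hne (max k (max j N))
  exact ⟨max j N, le_max_right _ _, (image_mono (hX (le_max_left _ _))).trans hj,
    x, hk (hX (le_max_left _ _) hx), hX (le_max_right _ _) hx⟩

end Chains

section RelativeFrontier

variable {U D : Set S}

theorem union_frIn_eq_closure_inter (hDU : D ⊆ U) : D ∪ frIn U D = closure D ∩ U :=
  union_sdiff_cancel (subset_inter subset_closure hDU)

theorem IsPreconnected.closure_inter (hD : IsPreconnected D) (hDU : D ⊆ U) :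
    IsPreconnected (closure D ∩ U) :=
  hD.subset_closure (subset_inter subset_closure hDU) inter_subset_left

theorem IsPreconnected.subset_of_disjoint_frIn {C : Set S} (hC : IsPreconnected C) (hCU : C ⊆ U)
    (hD : IsOpen D) (hCD : (C ∩ D).Nonempty) (hCF : Disjoint C (frIn U D)) : C ⊆ D :=
  hC.subset_of_closure_inter_subset hD hCD fun _ ⟨hxD, hxC⟩ =>
    by_contra fun hx => hCF.ne_of_mem hxC ⟨⟨hxD, hCU hxC⟩, hx⟩ rfl

theorem Homeomorph.image_closure_inter (g : S ≃ₜ S) (hgU : g '' U = U) :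
    g '' (closure D ∩ U) = closure (g '' D) ∩ U := by
  rw [image_inter g.injective, g.image_closure, hgU]

theorem Homeomorph.subset_union_image_of_frIn_subset (g : S ≃ₜ S) (hgU : g '' U = U)
    (hU : IsPreconnected U) (hD : IsOpen D) (hDne : D.Nonempty) (hDU : D ⊆ U)
    (hgF : g '' frIn U D ⊆ D) (hsF : g.symm '' frIn U D ⊆ D) : U ⊆ D ∪ g '' D := by
  obtain ⟨x, hx⟩ := hDne
  refine hU.subset_of_closure_inter_subset (hD.union (g.isOpenMap D hD)) ⟨x, hDU hx, Or.inl hx⟩ ?_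
  have hFgD : frIn U D ⊆ g '' D := fun y hy =>
    ⟨g.symm y, hsF (mem_image_of_mem _ hy), g.apply_symm_apply y⟩
  rw [closure_union, union_inter_distrib_right, ← g.image_closure_inter hgU,
    ← union_frIn_eq_closure_inter hDU, image_union]
  exact union_subset (union_subset subset_union_left (hFgD.trans subset_union_right))
    (union_subset subset_union_right (hgF.trans subset_union_left))

end RelativeFrontier

section Recurrence

variable [MeasurableSpace S] [OpensMeasurableSpace S] {μ : Measure S} [IsFiniteMeasure μ]
  [μ.IsOpenPosMeasure]

/-- Poincaré recurrence: a point of `interior K \ closure (g '' K)` never returns to that set. -/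
theorem MeasureTheory.MeasurePreserving.interior_subset_closure_image {g : S → S}
    (hg : MeasurePreserving g μ μ) {K : Set S} (hK : MapsTo g K K) :
    interior K ⊆ closure (g '' K) := by
  by_contra hsub
  obtain ⟨x, hxO⟩ : (interior K \ closure (g '' K)).Nonempty := sdiff_nonempty.mpr hsub
  have hO : IsOpen (interior K \ closure (g '' K)) := isOpen_interior.sdiff isClosed_closure
  obtain ⟨y, hy, m, hm, hmy⟩ :=
    hg.exists_mem_iterate_mem hO.nullMeasurableSet (hO.measure_ne_zero μ ⟨x, hxO⟩)
  obtain ⟨n, rfl⟩ := Nat.exists_eq_succ_of_ne_zero hm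
  rw [Function.iterate_succ_apply'] at hmy
  exact hmy.2 (subset_closure (mem_image_of_mem g (hK.iterate n (interior_subset hy.1))))

variable {U D : Set S} {g : S ≃ₜ S}

theorem MeasureTheory.MeasurePreserving.not_image_closure_inter_subset
    (hg : MeasurePreserving g μ μ) (hgU : g '' U = U) (hD : IsOpen D) (hDU : D ⊆ U)
    (hF : (frIn U D).Nonempty) : ¬ g '' (closure D ∩ U) ⊆ D := by
  intro htrap
  obtain ⟨x, ⟨hxD, hxU⟩, hx⟩ := hF
  have hDK : D ⊆ closure D ∩ U := subset_inter subset_closure hDU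
  have hrec := hg.interior_subset_closure_image fun y hy => hDK (htrap (mem_image_of_mem g hy))
  have hcl : closure D ⊆ closure (g '' D) :=
    closure_minimal ((hD.subset_interior_iff.mpr hDK).trans (hrec.trans
      (closure_minimal (by rw [g.image_closure_inter hgU]; exact inter_subset_left)
        isClosed_closure))) isClosed_closure
  exact hx (htrap (by rw [g.image_closure_inter hgU]; exact ⟨hcl hxD, hxU⟩))

theorem MeasureTheory.MeasurePreserving.symm_image_frIn_subset
    (hg : MeasurePreserving g μ μ) (hgU : g '' U = U) (hD : IsOpen D) (hDc : IsPreconnected D)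
    (hDU : D ⊆ U) (hF : (frIn U D).Nonempty) (hFc : IsPreconnected (frIn U D))
    (hgF : Disjoint (g '' frIn U D) (frIn U D)) (hgD : (g '' D ∩ D).Nonempty) :
    g.symm '' frIn U D ⊆ D := by
  have hFU : frIn U D ⊆ U := fun x hx => hx.1.2
  by_contra hsub
  have hsF := g.disjoint_symm_image_self hgF
  have hsD : Disjoint (g.symm '' frIn U D) D := by
    rw [disjoint_iff_inter_eq_empty, ← not_nonempty_iff_eq_empty]
    exact fun hmeet => hsub ((hFc.image _ g.symm.continuous.continuousOn).subset_of_disjoint_frIn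
      ((image_mono hFU).trans (g.symm_image_eq hgU).subset) hD hmeet hsF)
  have hgDF : Disjoint (g '' D) (frIn U D) := by
    rw [disjoint_image_left, ← g.image_symm]
    exact hsD.symm
  have htrap : g '' (closure D ∩ U) ⊆ D := by
    refine ((hDc.closure_inter hDU).image _ g.continuous.continuousOn).subset_of_disjoint_frIn
      ((image_mono inter_subset_right).trans hgU.subset) hD ?_ ?_
    · exact hgD.mono (inter_subset_inter_left _ (image_mono (subset_inter subset_closure hDU)))
    · rw [← union_frIn_eq_closure_inter hDU, image_union]
      exact disjoint_union_left.mpr ⟨hgDF, hgF⟩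
  exact hg.not_image_closure_inter_subset hgU hD hDU hF htrap

end Recurrence

theorem cartwright_littlewood_general
    [T2Space S]
    [MeasurableSpace S] [BorelSpace S]
    (μ : Measure S) [IsFiniteMeasure μ]
    (hpos : ∀ O : Set S, IsOpen O → O.Nonempty → 0 < μ O)
    (f : S ≃ₜ S) (hf : MeasurePreserving f μ μ)
    (U : Set S) (hUc : IsConnected U) (hUinv : f '' U = U)
    (V : ℕ → Set S)
    (hfixed : ChainEquiv (fun i => f '' V i) V)
    (p : S) (W : ℕ → Set S) (hW : IsPEChain U W) (hWV : ChainEquiv W V)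
    (hp : FrTendsTo U W p) :
    f p = p := by
  by_contra hne
  have : μ.IsOpenPosMeasure := ⟨fun O hO hO' => (hpos O hO hO').ne'⟩
  obtain ⟨hWo, hWc, hWU, hWn, hWF, -⟩ := hW
  have hWanti : Antitone W := antitone_nat_of_succ_le hWn
  obtain ⟨A, hAo, hpA, hfA⟩ := exists_isOpen_disjoint_image f.continuous hne
  obtain ⟨N, hN⟩ := eventually_atTop.mp (hp A (hAo.mem_nhds hpA))
  have hfW : ChainEquiv (fun i => f '' W i) W := ((hWV.image f).trans hfixed).trans hWV.symm
  obtain ⟨a, haN, hfa, hmeet⟩ :=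
    hfW.exists_image_subset_and_inter_nonempty hWanti (fun i => (hWc i).nonempty) N
  have hfF : Disjoint (f '' frIn U (W a)) (frIn U (W a)) :=
    hfA.mono (image_mono (hN a haN)) (hN a haN)
  have hsF : f.symm '' frIn U (W a) ⊆ W a :=
    hf.symm_image_frIn_subset hUinv (hWo a) (hWc a).isPreconnected (hWU a) (hWF a).1 (hWF a).2
      hfF hmeet
  have hfF' : f '' frIn U (W a) ⊆ W a := by
    simpa using (f.measurePreserving_symm hf).symm_image_frIn_subset (f.symm_image_eq hUinv)
      (hWo a) (hWc a).isPreconnected (hWU a) (hWF a).1 (hWF a).2 (f.disjoint_symm_image_self hfF)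
      (f.symm_image_inter_self_nonempty hmeet)
  have hUW : U ⊆ W N := (f.subset_union_image_of_frIn_subset hUinv hUc.isPreconnected (hWo a)
    (hWc a).nonempty (hWU a) hfF' hsF).trans (union_subset (hWanti haN) hfa)
  obtain ⟨x, hx⟩ := (hWF N).1
  exact hx.2 (hUW hx.1.2)

/-- Cartwright–Littlewood: if the prime end represented by the prime chain `V`
in the invariant domain `U` is fixed by the induced map (i.e. `(f(Vᵢ))` is a
chain equivalent to `(Vᵢ)`), then every principal point `p` of this prime end
is a fixed point of `f`. -/
theorem cartwright_littlewood
    [CompactSpace S] [ConnectedSpace S] [T2Space S]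
    [MeasurableSpace S] [BorelSpace S]
    (μ : Measure S) [IsFiniteMeasure μ]
    (hpos : ∀ O : Set S, IsOpen O → O.Nonempty → 0 < μ O)
    (f : S ≃ₜ S) (hf : MeasurePreserving f μ μ)
    (U : Set S) (hUo : IsOpen U) (hUc : IsConnected U) (hUinv : f '' U = U)
    (V : ℕ → Set S) (hV : IsPEChain U V)
    (hVprime : ∀ W : ℕ → Set S, IsPEChain U W → ChainDivides W V → ChainEquiv W V)
    (hfixed : ChainEquiv (fun i => f '' V i) V)
    (p : S) (W : ℕ → Set S) (hW : IsPEChain U W) (hWV : ChainEquiv W V)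
    (hp : FrTendsTo U W p) :
    f p = p :=
  cartwright_littlewood_general μ hpos f hf U hUc hUinv V hfixed p W hW hWV hp
end

section
/- Let f : S → S be an area-preserving homeomorphism of a surface S with invariant domain U having finitely many ideal boundary points, let e be a fixed prime end of U, p a principal point of e, and (Vᵢ) a chain defining e with fr_U(Vᵢ) → p. Let i₀ = inf{ i ≥ 1 : f(Vᵢ) ⊆ V₁ }. Then for all i ≥ i₀, fr_U(Vᵢ) ∩ fr_U(f(Vᵢ)) ≠ ∅. -/
open Filter Topology MeasureTheory

variable {S : Type*} [TopologicalSpace S]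

/-!
Suppose the relative frontiers of `A = Vᵢ` and `B = f(Vᵢ)` are disjoint. A connected set missing
`fr_U A` lies in `A` or misses `closure A`. If `fr_U A` missed `closure B`, the connected set `B`,
which meets `A`, would lie in `A`; then `fr_U B ⊆ closure A` forces `fr_U B ⊆ A`, so
`closure B ∩ U ⊆ A`. As `μ A = μ B` and `μ` charges open sets, `A ⊆ closure B`, leaving no room
for `fr_U A`. Hence `fr_U A ⊆ B` and symmetrically `fr_U B ⊆ A`, so `A ∪ B` has empty frontier
in the connected set `U` and fills it. But for `i ≥ i₀` both `A` and `B` lie in `V₀`, whose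
frontier shows `V₀ ≠ U`.
-/

open Set

lemma frIn_subset (U A : Set S) : frIn U A ⊆ U := fun _ hx => hx.1.2

lemma frIn_subset_closure (U A : Set S) : frIn U A ⊆ closure A := fun _ hx => hx.1.1

lemma closure_inter_subset_union_frIn (U A : Set S) : closure A ∩ U ⊆ A ∪ frIn U A :=
  fun _ hx => or_iff_not_imp_left.2 fun hxA => ⟨hx, hxA⟩

lemma frIn_image (f : S ≃ₜ S) {U : Set S} (hU : f '' U = U) (A : Set S) :
    frIn U (f '' A) = f '' frIn U A := by
  rw [frIn, frIn, image_sdiff f.injective, image_inter f.injective, f.image_closure, hU]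

lemma frIn_union_eq_empty {U A B : Set S} (hA : frIn U A ⊆ B) (hB : frIn U B ⊆ A) :
    frIn U (A ∪ B) = ∅ := by
  refine eq_empty_of_forall_notMem fun x ⟨⟨hxcl, hxU⟩, hxAB⟩ => hxAB ?_
  rw [closure_union] at hxcl
  rcases hxcl with hxA | hxB
  · exact (closure_inter_subset_union_frIn U A ⟨hxA, hxU⟩).imp id fun h => hA h
  · exact ((closure_inter_subset_union_frIn U B ⟨hxB, hxU⟩).imp id fun h => hB h).symm

lemma IsPreconnected.subset_or_disjoint_closure_of_disjoint_frIn {U A s : Set S}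
    (hs : IsPreconnected s) (hA : IsOpen A) (hsU : s ⊆ U) (hd : Disjoint s (frIn U A)) :
    s ⊆ A ∨ Disjoint s (closure A) := by
  have hcover : s ⊆ A ∪ (closure A)ᶜ := fun x hx =>
    or_iff_not_imp_right.2 fun hxcl => by_contra fun hxA =>
      disjoint_left.1 hd hx ⟨⟨not_not.1 hxcl, hsU hx⟩, hxA⟩
  rw [← subset_compl_iff_disjoint_right]
  exact hs.subset_or_subset hA isClosed_closure.isOpen_compl
    (disjoint_compl_right.mono_right (compl_subset_compl.2 subset_closure)) hcover

lemma IsPreconnected.subset_of_disjoint_frIn_s12 {U A s : Set S} (hs : IsPreconnected s)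
    (hA : IsOpen A) (hsU : s ⊆ U) (hsA : (s ∩ A).Nonempty) (hd : Disjoint s (frIn U A)) :
    s ⊆ A :=
  (hs.subset_or_disjoint_closure_of_disjoint_frIn hA hsU hd).resolve_right fun h =>
    not_disjoint_iff_nonempty_inter.2 (hsA.mono (inter_subset_inter_right s subset_closure)) h

lemma IsPreconnected.subset_of_frIn_eq_empty {U W : Set S} (hU : IsPreconnected U)
    (hW : IsOpen W) (hUW : (U ∩ W).Nonempty) (h : frIn U W = ∅) : U ⊆ W :=
  hU.subset_of_disjoint_frIn_s12 hW subset_rfl hUW (h ▸ disjoint_empty U)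

lemma subset_closure_of_subset_of_measure_le [MeasurableSpace S] {μ : Measure S}
    [μ.IsOpenPosMeasure] {A B : Set S} (hA : IsOpen A) (hBA : B ⊆ A)
    (hB : NullMeasurableSet B μ) (hμ : μ A ≤ μ B) (hμA : μ A ≠ ⊤) : A ⊆ closure B := by
  have hnull : μ (A \ B) = 0 :=
    ae_le_set.1 (ae_eq_of_subset_of_measure_ge hBA hμ hB hμA).symm.le
  refine sdiff_eq_empty.1 ((hA.sdiff isClosed_closure).eq_empty_of_measure_zero (μ := μ) ?_)
  exact measure_mono_null (sdiff_subset_sdiff_right subset_closure) hnull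

structure IsCrossCutDomain (U A : Set S) : Prop where
  isOpen : IsOpen A
  isPreconnected : IsPreconnected A
  subset : A ⊆ U
  frIn_nonempty : (frIn U A).Nonempty
  frIn_isPreconnected : IsPreconnected (frIn U A)

namespace IsCrossCutDomain

variable {U A B : Set S}

lemma image (hA : IsCrossCutDomain U A) (f : S ≃ₜ S) (hU : f '' U = U) :
    IsCrossCutDomain U (f '' A) where
  isOpen := f.isOpenMap A hA.isOpen
  isPreconnected := hA.isPreconnected.image f f.continuous.continuousOn
  subset := hU ▸ image_mono hA.subset
  frIn_nonempty := frIn_image f hU A ▸ hA.frIn_nonempty.image f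
  frIn_isPreconnected :=
    frIn_image f hU A ▸ hA.frIn_isPreconnected.image f f.continuous.continuousOn

lemma subset_and_frIn_subset_of_frIn_disjoint_closure (hA : IsCrossCutDomain U A)
    (hB : IsCrossCutDomain U B) (hd : Disjoint (frIn U A) (frIn U B))
    (hAcl : Disjoint (frIn U A) (closure B)) (hAB : (A ∩ B).Nonempty) :
    B ⊆ A ∧ frIn U B ⊆ A := by
  have hBA : B ⊆ A := hB.isPreconnected.subset_of_disjoint_frIn_s12 hA.isOpen hB.subset
    (inter_comm A B ▸ hAB) (hAcl.symm.mono_left subset_closure)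
  refine ⟨hBA, (hB.frIn_isPreconnected.subset_or_disjoint_closure_of_disjoint_frIn hA.isOpen
    (frIn_subset U B) hd.symm).resolve_right fun h => hB.frIn_nonempty.ne_empty ?_⟩
  exact disjoint_self.1 (h.mono_right ((frIn_subset_closure U B).trans (closure_mono hBA)))

lemma frIn_subset_of_disjoint_frIn [MeasurableSpace S] [OpensMeasurableSpace S]
    {μ : Measure S} [μ.IsOpenPosMeasure] (hA : IsCrossCutDomain U A)
    (hB : IsCrossCutDomain U B) (hμ : μ A ≤ μ B) (hμA : μ A ≠ ⊤) (hAB : (A ∩ B).Nonempty)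
    (hd : Disjoint (frIn U A) (frIn U B)) : frIn U A ⊆ B := by
  refine (hA.frIn_isPreconnected.subset_or_disjoint_closure_of_disjoint_frIn hB.isOpen
    (frIn_subset U A) hd).resolve_right fun hAcl => ?_
  obtain ⟨hBA, hFBA⟩ := hA.subset_and_frIn_subset_of_frIn_disjoint_closure hB hd hAcl hAB
  have hAB' : A ⊆ closure B := subset_closure_of_subset_of_measure_le hA.isOpen hBA
    hB.isOpen.measurableSet.nullMeasurableSet hμ hμA
  obtain ⟨x, ⟨hxcl, hxU⟩, hxA⟩ := hA.frIn_nonempty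
  have hxB : x ∈ closure B := closure_minimal hAB' isClosed_closure hxcl
  exact (closure_inter_subset_union_frIn U B ⟨hxB, hxU⟩).elim (fun h => hxA (hBA h))
    fun h => hxA (hFBA h)

end IsCrossCutDomain

namespace IsPEChain

variable {U : Set S} {V : ℕ → Set S}

lemma antitone (hV : IsPEChain U V) : Antitone V := antitone_nat_of_succ_le hV.2.2.2.1

lemma isCrossCutDomain (hV : IsPEChain U V) (i : ℕ) : IsCrossCutDomain U (V i) where
  isOpen := hV.1 i
  isPreconnected := (hV.2.1 i).isPreconnected
  subset := hV.2.2.1 i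
  frIn_nonempty := (hV.2.2.2.2.1 i).1
  frIn_isPreconnected := (hV.2.2.2.2.1 i).2

lemma inter_nonempty_of_chainDivides {W : ℕ → Set S} (hV : IsPEChain U V)
    (h : ChainDivides V W) (i : ℕ) : (V i ∩ W i).Nonempty := by
  obtain ⟨j, hj⟩ := h i
  obtain ⟨x, hx⟩ := (hV.2.1 (max i j)).nonempty
  exact ⟨x, hV.antitone (le_max_left i j) hx, hj (hV.antitone (le_max_right i j) hx)⟩

end IsPEChain

lemma ChainDivides.subset_of_sInf_le {T : Type*} {W V : ℕ → Set T} (h : ChainDivides W V)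
    (hW : Antitone W) {i : ℕ} (hi : sInf {j | W j ⊆ V 0} ≤ i) : W i ⊆ V 0 :=
  (hW hi).trans (Nat.sInf_mem (h 0))

theorem frontier_meets_image_frontier_general
    [MeasurableSpace S] [BorelSpace S]
    (μ : Measure S) [IsFiniteMeasure μ]
    (hpos : ∀ O : Set S, IsOpen O → O.Nonempty → 0 < μ O)
    (f : S ≃ₜ S) (hf : MeasurePreserving f μ μ)
    (U : Set S) (hUc : IsConnected U) (hUinv : f '' U = U)
    (V : ℕ → Set S) (hV : IsPEChain U V)
    (hfixed : ChainEquiv (fun i => f '' V i) V) :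
    ∀ i : ℕ, sInf {j : ℕ | f '' V j ⊆ V 0} ≤ i →
      (frIn U (V i) ∩ frIn U (f '' V i)).Nonempty := by
  have : μ.IsOpenPosMeasure := ⟨fun O hO hne => (hpos O hO hne).ne'⟩
  intro i hi
  by_contra hd
  rw [not_nonempty_iff_eq_empty, ← disjoint_iff_inter_eq_empty] at hd
  have hA := hV.isCrossCutDomain i
  have hB := hA.image f hUinv
  have hμ : μ (f '' V i) = μ (V i) := by
    rw [← hf.measure_preimage hB.isOpen.measurableSet.nullMeasurableSet,
      f.preimage_image]
  have hAB := hV.inter_nonempty_of_chainDivides hfixed.2 i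
  have hFA := hA.frIn_subset_of_disjoint_frIn hB hμ.ge (measure_ne_top μ _) hAB hd
  have hFB := hB.frIn_subset_of_disjoint_frIn hA hμ.le (measure_ne_top μ _)
    (inter_comm (V i) _ ▸ hAB) hd.symm
  have hUAB : U ⊆ V i ∪ f '' V i := hUc.isPreconnected.subset_of_frIn_eq_empty
    (hA.isOpen.union hB.isOpen) (hAB.mono fun x hx => ⟨hA.subset hx.1, .inl hx.1⟩)
    (frIn_union_eq_empty hFA hFB)
  have hBV0 : f '' V i ⊆ V 0 :=
    hfixed.1.subset_of_sInf_le (fun _ _ hjk => image_mono (hV.antitone hjk)) hi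
  obtain ⟨x, ⟨-, hxU⟩, hx0⟩ := (hV.isCrossCutDomain 0).frIn_nonempty
  exact hx0 (union_subset (hV.antitone i.zero_le) hBV0 (hUAB hxU))

/-- Lemma 3: for a fixed prime end represented by the chain `(Vᵢ)` with frontiers
converging to the principal point `p`, setting `i₀ = inf { i : f(Vᵢ) ⊆ V₀ }`,
we have `fr_U(Vᵢ) ∩ fr_U(f(Vᵢ)) ≠ ∅` for all `i ≥ i₀`. -/
theorem frontier_meets_image_frontier
    [CompactSpace S] [ConnectedSpace S] [T2Space S]
    [MeasurableSpace S] [BorelSpace S]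
    (μ : Measure S) [IsFiniteMeasure μ]
    (hpos : ∀ O : Set S, IsOpen O → O.Nonempty → 0 < μ O)
    (f : S ≃ₜ S) (hf : MeasurePreserving f μ μ)
    (U : Set S) (hUo : IsOpen U) (hUc : IsConnected U) (hUinv : f '' U = U)
    (V : ℕ → Set S) (hV : IsPEChain U V)
    (hfixed : ChainEquiv (fun i => f '' V i) V)
    (p : S) (hp : FrTendsTo U V p) :
    ∀ i : ℕ, sInf {j : ℕ | f '' V j ⊆ V 0} ≤ i →
      (frIn U (V i) ∩ frIn U (f '' V i)).Nonempty :=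
  frontier_meets_image_frontier_general μ hpos f hf U hUc hUinv V hV hfixed
end
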